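/- For every real number α > 0 and every natural number k ≥ 1, ∫_{0}^{∞} e^{-αx} sech^{k+1}(x) dx + ((α - (k-1))/k) · ∫_{0}^{∞} e^{-(α+1)x} sech^{k}(x) dx = 1/k. -/

import Mathlib

/-!
Put `F x = exp (-(α + 1) x) sech^k x`. Since `exp x sech x = 1 + tanh x`,
`-F' = k exp (-α x) sech^(k+1) x + (α + 1 - k) exp (-(α + 1) x) sech^k x`, and integrating over
`(0, ∞)`, where `F 0 = 1` and `F → 0`, gives `k` times the identity.
-/

open MeasureTheory Real Filter Set Topology

lemma one_div_cosh_pow_le_one (x : ℝ) (n : ℕ) : (1 / cosh x) ^ n ≤ 1 :=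
  pow_le_one₀ (by positivity) ((div_le_one (cosh_pos x)).mpr (one_le_cosh x))

lemma exp_mul_one_div_cosh_pow_le_exp (b x : ℝ) (n : ℕ) :
    exp (-b * x) * (1 / cosh x) ^ n ≤ exp (-b * x) :=
  mul_le_of_le_one_right (exp_nonneg _) (one_div_cosh_pow_le_one x n)

lemma integrableOn_exp_mul_one_div_cosh_pow {b : ℝ} (hb : 0 < b) (n : ℕ) :
    IntegrableOn (fun x => exp (-b * x) * (1 / cosh x) ^ n) (Ioi 0) := by
  refine (exp_neg_integrableOn_Ioi 0 hb).mono' (by fun_prop) (ae_of_all _ fun x => ?_)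
  rw [norm_of_nonneg (by positivity)]
  exact exp_mul_one_div_cosh_pow_le_exp b x n

lemma tendsto_exp_mul_one_div_cosh_pow_atTop {b : ℝ} (hb : 0 < b) (n : ℕ) :
    Tendsto (fun x => exp (-b * x) * (1 / cosh x) ^ n) atTop (𝓝 0) := by
  refine squeeze_zero (fun x => by positivity) (fun x => exp_mul_one_div_cosh_pow_le_exp b x n) ?_
  exact tendsto_exp_atBot.comp (tendsto_id.const_mul_atTop_of_neg (neg_lt_zero.mpr hb))

lemma exp_mul_one_div_cosh (x : ℝ) : exp x * (1 / cosh x) = 1 + tanh x := by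
  rw [← cosh_add_sinh, tanh_eq_sinh_div_cosh]
  field_simp [(cosh_pos x).ne']

lemma hasDerivAt_one_div_cosh_pow (n : ℕ) (x : ℝ) :
    HasDerivAt (fun x => (1 / cosh x) ^ n) (-(n * (1 / cosh x) ^ n * tanh x)) x := by
  have hc : cosh x ≠ 0 := (cosh_pos x).ne'
  cases n with
  | zero => simpa using hasDerivAt_const x (1 : ℝ)
  | succ m =>
    refine (((hasDerivAt_const x (1 : ℝ)).div (hasDerivAt_cosh x) hc).fun_pow (m + 1)).congr_deriv ?_
    simp only [Pi.div_apply, tanh_eq_sinh_div_cosh, one_div, inv_pow]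
    push_cast
    field_simp
    ring

lemma hasDerivAt_exp_mul_one_div_cosh_pow (a : ℝ) (n : ℕ) (x : ℝ) :
    HasDerivAt (fun x => exp (-(a + 1) * x) * (1 / cosh x) ^ n)
      (-(n * (exp (-a * x) * (1 / cosh x) ^ (n + 1)) +
        (a + 1 - n) * (exp (-(a + 1) * x) * (1 / cosh x) ^ n))) x := by
  have hexp : HasDerivAt (fun x => exp (-(a + 1) * x)) (exp (-(a + 1) * x) * -(a + 1)) x := by
    simpa using ((hasDerivAt_id x).const_mul (-(a + 1))).exp
  refine (hexp.mul (hasDerivAt_one_div_cosh_pow n x)).congr_deriv ?_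
  have : exp (-a * x) * (1 / cosh x) ^ (n + 1) =
      exp (-(a + 1) * x) * (1 / cosh x) ^ n * (1 + tanh x) := by
    rw [← exp_mul_one_div_cosh, show -a * x = -(a + 1) * x + x by ring, exp_add]
    ring
  rw [this]
  ring

lemma integral_exp_mul_one_div_cosh_pow_recurrence {a : ℝ} (ha : 0 < a) (n : ℕ) :
    n * (∫ x in Ioi 0, exp (-a * x) * (1 / cosh x) ^ (n + 1)) +
      (a + 1 - n) * ∫ x in Ioi 0, exp (-(a + 1) * x) * (1 / cosh x) ^ n = 1 := by
  have ha1 : 0 < a + 1 := by linarith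
  have hI := (integrableOn_exp_mul_one_div_cosh_pow ha (n + 1)).const_mul (n : ℝ)
  have hJ := (integrableOn_exp_mul_one_div_cosh_pow ha1 n).const_mul (a + 1 - n)
  have hFTC := integral_Ioi_of_hasDerivAt_of_tendsto'
    (fun x _ => hasDerivAt_exp_mul_one_div_cosh_pow a n x) (hI.add hJ).neg
    (tendsto_exp_mul_one_div_cosh_pow_atTop ha1 n)
  have hF0 : exp (-(a + 1) * 0) * (1 / cosh 0) ^ n = 1 := by simp
  rw [integral_neg, integral_add hI hJ, integral_const_mul, integral_const_mul, hF0] at hFTC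
  linarith

theorem inductive_step_integral_identity (α : ℝ) (hα : 0 < α) (k : ℕ) (hk : 1 ≤ k) :
    (∫ x in Set.Ioi (0 : ℝ), Real.exp (-α * x) * (1 / Real.cosh x) ^ (k + 1)) +
      ((α - ((k : ℝ) - 1)) / k) *
        ∫ x in Set.Ioi (0 : ℝ), Real.exp (-(α + 1) * x) * (1 / Real.cosh x) ^ k
      = 1 / k := by
  have hk0 : (k : ℝ) ≠ 0 := Nat.cast_ne_zero.mpr (by omega)
  have hcoef : (α - ((k : ℝ) - 1)) / k * k = α + 1 - k := by field_simp; ring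
  rw [eq_div_iff hk0, add_mul, mul_right_comm, hcoef, mul_comm]
  exact integral_exp_mul_one_div_cosh_pow_recurrence hα k
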